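/- Let X be a nonzero real Banach space which is a Lindenstrauss space and which is an ai-ideal in every superspace, i.e., for every real Banach space Z and every isometric linear embedding of X into Z, the image of X is an ai-ideal in Z (by a theorem of Abrahamsen–Lima–Nygaard this property characterizes the Gurariĭ spaces). Then the closed unit ball B_X has no extreme points. -/

import Mathlib

/-- A subspace `Y` of `X` is an almost isometric ideal (ai-ideal) in `X`. -/
def IsAIIdeal (X : Type*) [NormedAddCommGroup X] [NormedSpace ℝ X]
    (Y : Subspace ℝ X) : Prop :=
  ∀ ε : ℝ, 0 < ε → ∀ E : Subspace ℝ X, FiniteDimensional ℝ E →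
    ∃ T : E →ₗ[ℝ] Y, (∀ e : E, (e : X) ∈ Y → ((T e : Y) : X) = (e : X)) ∧
      ∀ e : E, (1 + ε)⁻¹ * ‖(e : X)‖ ≤ ‖((T e : Y) : X)‖ ∧
        ‖((T e : Y) : X)‖ ≤ (1 + ε) * ‖(e : X)‖

/-- A Banach space is a Lindenstrauss space if its dual is isometrically isomorphic to
`L¹(μ)` for some measure `μ`. -/
def IsLindenstrauss (X : Type*) [NormedAddCommGroup X] [NormedSpace ℝ X] : Prop :=
  ∃ (α : Type) (_ : MeasurableSpace α) (μ : MeasureTheory.Measure α),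
    Nonempty (StrongDual ℝ X ≃ₗᵢ[ℝ] MeasureTheory.Lp ℝ 1 μ)

/-!
Let `‖x‖ ≤ 1` and `‖x ± y‖ ≤ 1 + ε`. Embed `X` isometrically into the bounded continuous functions
on the dual unit ball. There `w f = min (1 - |f x|) (f y + ε)` satisfies `‖x ± w‖ ≤ 1`,
`‖w - y‖ ≤ ε` and `‖w‖ ≥ ε`. Since `X` is an ai-ideal in that superspace, `w` can be pulled back
to some `y' ∈ X` with `‖x ± y'‖ ≤ 1 + δ` for any `δ > 0` and `‖y' - y‖ ≤ 2ε`. Iterating with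
`ε = 16⁻ⁿ` gives a Cauchy sequence whose limit `l` satisfies `‖x ± l‖ ≤ 1` and is nonzero because
the first step already moves away from `0` by `1/2`; hence `x` is not an extreme point.
-/

open Filter BoundedContinuousFunction

theorem abs_add_abs_le_of_abs_add_le_of_abs_sub_le {a b c : ℝ} (h₁ : |a + b| ≤ c)
    (h₂ : |a - b| ≤ c) : |a| + |b| ≤ c := by
  cases abs_cases a <;> cases abs_cases b <;> cases abs_le.mp h₁ <;> cases abs_le.mp h₂ <;>
    linarith

theorem abs_add_abs_min_le_one {a b ε : ℝ} (ha : |a| ≤ 1) (hab : |a| + |b| ≤ 1 + ε) :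
    |a| + |min (1 - |a|) (b + ε)| ≤ 1 := by
  rw [← le_sub_iff_add_le', abs_le]
  refine ⟨?_, min_le_left _ _⟩
  cases abs_cases b <;> exact le_min (by linarith) (by linarith)

theorem abs_min_sub_le {a b ε : ℝ} (hε : 0 ≤ ε) (hab : |a| + |b| ≤ 1 + ε) :
    |min (1 - |a|) (b + ε) - b| ≤ ε := by
  rw [abs_le]
  constructor
  · cases abs_cases b <;> exact le_sub_iff_add_le.mpr (le_min (by linarith) (by linarith))
  · linarith [min_le_right (1 - |a|) (b + ε)]

theorem exists_mem_iInter_dist_le_of_forall_exists_dist_le {α : Type*} [PseudoMetricSpace α]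
    [CompleteSpace α] {S : ℕ → Set α} (hS : ∀ n, IsClosed (S n)) (hS' : Antitone S) {C r : ℝ}
    (hr : r < 1) {a : α} (ha : a ∈ S 0)
    (step : ∀ n, ∀ y ∈ S n, ∃ y' ∈ S (n + 1), dist y y' ≤ C * r ^ n) :
    ∃ l ∈ ⋂ n, S n, dist a l ≤ C / (1 - r) := by
  choose! f hfS hfdist using step
  let u : ℕ → α := fun n => Nat.rec a f n
  have hu : ∀ n, u n ∈ S n := fun n => by
    induction n with
    | zero => exact ha
    | succ n ih => exact hfS n _ ih
  have hdist : ∀ n, dist (u n) (u (n + 1)) ≤ C * r ^ n := fun n => hfdist n _ (hu n)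
  obtain ⟨l, hl⟩ := cauchySeq_tendsto_of_complete (cauchySeq_of_le_geometric r C hr hdist)
  refine ⟨l, Set.mem_iInter.mpr fun n => ?_,
    dist_le_of_le_geometric_of_tendsto₀ r C hr hdist hl⟩
  exact (hS n).mem_of_tendsto hl (eventually_atTop.mpr ⟨n, fun m hm => hS' hm (hu m)⟩)

theorem eq_zero_of_add_mem_of_sub_mem_of_mem_extremePoints {E : Type*} [AddCommGroup E]
    [Module ℝ E] {A : Set E} {x v : E} (hx : x ∈ A.extremePoints ℝ) (h₁ : x + v ∈ A)
    (h₂ : x - v ∈ A) : v = 0 := by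
  have hseg : x ∈ openSegment ℝ (x + v) (x - v) :=
    ⟨1 / 2, 1 / 2, by norm_num, by norm_num, by norm_num, by module⟩
  simpa using hx.2 h₁ h₂ hseg

theorem IsAIIdeal.exists_forall_norm_add_smul_le {X Z : Type*} [NormedAddCommGroup X]
    [NormedSpace ℝ X] [NormedAddCommGroup Z] [NormedSpace ℝ Z] {J : X →ₗᵢ[ℝ] Z}
    (hJ : IsAIIdeal Z (LinearMap.range J.toLinearMap)) (F : Submodule ℝ X)
    [FiniteDimensional ℝ F] (w : Z) {δ : ℝ} (hδ : 0 < δ) :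
    ∃ y : X, ∀ a ∈ F, ∀ c : ℝ,
      ‖J a + c • w‖ ≤ (1 + δ) * ‖a + c • y‖ ∧ ‖a + c • y‖ ≤ (1 + δ) * ‖J a + c • w‖ := by
  let E := F.map J.toLinearMap ⊔ ℝ ∙ w
  obtain ⟨T, hT_fix, hT_norm⟩ := hJ δ hδ E inferInstance
  have hw : w ∈ E := Submodule.mem_sup_right (Submodule.mem_span_singleton_self w)
  obtain ⟨y, hy⟩ := (T ⟨w, hw⟩).2
  refine ⟨y, fun a ha c => ?_⟩
  have hJa : J a ∈ E := Submodule.mem_sup_left (Submodule.mem_map_of_mem ha)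
  have hT : ((T (⟨J a, hJa⟩ + c • ⟨w, hw⟩) : LinearMap.range J.toLinearMap) : Z) =
      J (a + c • y) := by
    rw [map_add, map_smul, Submodule.coe_add, Submodule.coe_smul, hT_fix _ ⟨a, rfl⟩, ← hy]
    simp
  obtain ⟨hlower, hupper⟩ := hT_norm (⟨J a, hJa⟩ + c • ⟨w, hw⟩)
  rw [hT, J.norm_map] at hlower hupper
  refine ⟨?_, hupper⟩
  rwa [inv_mul_le_iff₀ (by linarith)] at hlower

section DualBall

variable {X : Type*} [NormedAddCommGroup X] [NormedSpace ℝ X]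

variable (X) in
abbrev DualBall : Set (StrongDual ℝ X) := Metric.closedBall 0 1

theorem abs_apply_le_of_mem_dualBall {f : StrongDual ℝ X} (hf : f ∈ DualBall X) (z : X) :
    |f z| ≤ ‖z‖ := by
  rw [← Real.norm_eq_abs]
  exact (f.le_opNorm z).trans
    (mul_le_of_le_one_left (norm_nonneg z) (mem_closedBall_zero_iff.mp hf))

variable (X) in
noncomputable def evalDualBall : X →ₗᵢ[ℝ] (DualBall X →ᵇ ℝ) where
  toFun z := ofNormedAddCommGroup (fun f => f.1 z) (by fun_prop) ‖z‖
    fun f => abs_apply_le_of_mem_dualBall f.2 z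
  map_add' _ _ := by ext; simp
  map_smul' _ _ := by ext; simp
  norm_map' z := by
    dsimp only [LinearMap.coe_mk, AddHom.coe_mk]
    refine le_antisymm (norm_ofNormedAddCommGroup_le _ (norm_nonneg z)
      fun f => abs_apply_le_of_mem_dualBall f.2 z) ?_
    obtain ⟨g, hg, hgz⟩ := exists_dual_vector'' ℝ z
    refine le_trans (le_of_eq ?_)
      (norm_coe_le_norm _ (⟨g, mem_closedBall_zero_iff.mpr hg⟩ : DualBall X))
    simp [hgz]

theorem exists_norm_evalDualBall_add_le_one {x y : X} {ε : ℝ} (hε : 0 ≤ ε) (hε1 : ε ≤ 1)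
    (hx : ‖x‖ ≤ 1) (hxy : ‖x + y‖ ≤ 1 + ε) (hxy' : ‖x - y‖ ≤ 1 + ε) :
    ∃ w : DualBall X →ᵇ ℝ, ‖evalDualBall X x + w‖ ≤ 1 ∧ ‖evalDualBall X x - w‖ ≤ 1 ∧
      ‖w - evalDualBall X y‖ ≤ ε ∧ ε ≤ ‖w‖ := by
  let c : DualBall X → ℝ := fun f => min (1 - |f.1 x|) (f.1 y + ε)
  have hfx : ∀ f : DualBall X, |f.1 x| ≤ 1 := fun f =>
    (abs_apply_le_of_mem_dualBall f.2 x).trans hx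
  have hfxy : ∀ f : DualBall X, |f.1 x| + |f.1 y| ≤ 1 + ε := fun f =>
    abs_add_abs_le_of_abs_add_le_of_abs_sub_le
      (by simpa using (abs_apply_le_of_mem_dualBall f.2 (x + y)).trans hxy)
      (by simpa using (abs_apply_le_of_mem_dualBall f.2 (x - y)).trans hxy')
  have hc : ∀ f : DualBall X, |f.1 x| + ‖c f‖ ≤ 1 := fun f =>
    abs_add_abs_min_le_one (hfx f) (hfxy f)
  let w := ofNormedAddCommGroup c (by fun_prop) 1
    fun f => by linarith [hc f, abs_nonneg (f.1 x)]
  refine ⟨w, ?_, ?_, ?_, ?_⟩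
  · exact (norm_le zero_le_one).mpr fun f => (abs_add_le _ _).trans (hc f)
  · exact (norm_le zero_le_one).mpr fun f => (abs_sub _ _).trans (hc f)
  · exact (norm_le hε).mpr fun f => abs_min_sub_le hε (hfxy f)
  · calc ε = ‖w ⟨0, Metric.mem_closedBall_self zero_le_one⟩‖ := by
          simp [w, c, abs_of_nonneg hε, hε1]
      _ ≤ ‖w‖ := norm_coe_le_norm _ _

end DualBall

def IsAIIdealInEverySuperspace (X : Type) [NormedAddCommGroup X] [NormedSpace ℝ X] : Prop :=
  ∀ (Z : Type) [NormedAddCommGroup Z] [NormedSpace ℝ Z] [CompleteSpace Z]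
    (J : X →ₗᵢ[ℝ] Z), IsAIIdeal Z (LinearMap.range J.toLinearMap)

namespace IsAIIdealInEverySuperspace

variable {X : Type} [NormedAddCommGroup X] [NormedSpace ℝ X]

theorem exists_close_of_norm_add_le_of_norm_sub_le (hX : IsAIIdealInEverySuperspace X)
    {x y : X} {ε δ : ℝ} (hε : 0 ≤ ε) (hε1 : ε ≤ 1) (hδ : 0 < δ) (hδ1 : δ ≤ 1) (hx : ‖x‖ ≤ 1)
    (hxy : ‖x + y‖ ≤ 1 + ε) (hxy' : ‖x - y‖ ≤ 1 + ε) :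
    ∃ y' : X, ‖x + y'‖ ≤ 1 + δ ∧ ‖x - y'‖ ≤ 1 + δ ∧ ‖y' - y‖ ≤ 2 * ε ∧ ε ≤ 2 * ‖y'‖ := by
  obtain ⟨w, hxw, hxw', hwy, hw⟩ := exists_norm_evalDualBall_add_le_one hε hε1 hx hxy hxy'
  have : FiniteDimensional ℝ (Submodule.span ℝ {x, y}) :=
    FiniteDimensional.span_of_finite ℝ (Set.toFinite _)
  obtain ⟨y', hy'⟩ := (hX _ (evalDualBall X)).exists_forall_norm_add_smul_le
    (Submodule.span ℝ {x, y}) w hδ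
  have hxF : x ∈ Submodule.span ℝ {x, y} := Submodule.subset_span (by simp)
  have hyF : -y ∈ Submodule.span ℝ {x, y} := neg_mem (Submodule.subset_span (by simp))
  have h₁ := (hy' x hxF 1).2
  have h₂ := (hy' x hxF (-1)).2
  have h₃ := (hy' (-y) hyF 1).2
  have h₄ := (hy' 0 (zero_mem _) 1).1
  simp only [one_smul, neg_one_smul, ← sub_eq_add_neg, map_neg, neg_add_eq_sub, map_zero,
    zero_add] at h₁ h₂ h₃ h₄
  refine ⟨y', h₁.trans (mul_le_of_le_one_right (by linarith) hxw),
    h₂.trans (mul_le_of_le_one_right (by linarith) hxw'),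
    h₃.trans (mul_le_mul (by linarith) hwy (norm_nonneg _) zero_le_two),
    hw.trans (h₄.trans (mul_le_mul_of_nonneg_right (by linarith) (norm_nonneg _)))⟩

theorem exists_ne_zero_norm_add_le_one_and_norm_sub_le_one [CompleteSpace X]
    (hX : IsAIIdealInEverySuperspace X) {x : X} (hx : ‖x‖ ≤ 1) :
    ∃ l : X, l ≠ 0 ∧ ‖x + l‖ ≤ 1 ∧ ‖x - l‖ ≤ 1 := by
  -- `1/16` makes the total later displacement `2r / (1 - r) = 2/15` smaller than the length
  -- `≥ 1/2` of the first step.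
  set r : ℝ := 1 / 16 with hr
  have hr0 : 0 < r := by norm_num [hr]
  have hr1 : r < 1 := by norm_num [hr]
  let S : ℕ → Set X := fun n => {y | ‖x + y‖ ≤ 1 + r ^ (n + 1) ∧ ‖x - y‖ ≤ 1 + r ^ (n + 1)}
  have hS : ∀ n, IsClosed (S n) := fun n => by
    simp only [S, Set.ofPred_and]
    exact (isClosed_le (by fun_prop) continuous_const).inter
      (isClosed_le (by fun_prop) continuous_const)
  have hS' : Antitone S := fun m n hmn y hy => by
    have := pow_le_pow_of_le_one hr0.le hr1.le (by omega : m + 1 ≤ n + 1)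
    exact ⟨hy.1.trans (by linarith), hy.2.trans (by linarith)⟩
  have step : ∀ n, ∀ y ∈ S n, ∃ y' ∈ S (n + 1), dist y y' ≤ 2 * r * r ^ n := by
    intro n y hy
    obtain ⟨y', h₁, h₂, h₃, -⟩ := hX.exists_close_of_norm_add_le_of_norm_sub_le
      (pow_nonneg hr0.le _) (pow_le_one₀ hr0.le hr1.le) (pow_pos hr0 _)
      (pow_le_one₀ hr0.le hr1.le) hx hy.1 hy.2
    refine ⟨y', ⟨h₁, h₂⟩, ?_⟩
    rw [dist_comm, dist_eq_norm]
    linarith [pow_succ' r n]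
  obtain ⟨a, ha₁, ha₂, -, ha⟩ := hX.exists_close_of_norm_add_le_of_norm_sub_le (y := 0)
    zero_le_one le_rfl hr0 hr1.le hx (by norm_num; linarith) (by norm_num; linarith)
  obtain ⟨l, hl, hal⟩ := exists_mem_iInter_dist_le_of_forall_exists_dist_le hS hS' hr1
    (a := a) (by simpa [S] using ⟨ha₁, ha₂⟩) step
  have hlim : ∀ t : ℝ, (∀ n, t ≤ 1 + r ^ (n + 1)) → t ≤ 1 := fun t ht =>
    ge_of_tendsto' (by simpa using ((tendsto_pow_atTop_nhds_zero_of_lt_one hr0.le hr1).comp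
      (tendsto_add_atTop_nat 1)).const_add 1) ht
  refine ⟨l, ?_, hlim _ fun n => (Set.mem_iInter.mp hl n).1,
    hlim _ fun n => (Set.mem_iInter.mp hl n).2⟩
  rintro rfl
  rw [dist_zero_right] at hal
  norm_num [hr] at hal
  linarith

end IsAIIdealInEverySuperspace

theorem extremePoints_eq_empty_of_lindenstrauss_gurarii
    (X : Type) [NormedAddCommGroup X] [NormedSpace ℝ X] [CompleteSpace X]
    (hX : ∀ (Z : Type) [NormedAddCommGroup Z] [NormedSpace ℝ Z] [CompleteSpace Z]
      (J : X →ₗᵢ[ℝ] Z), IsAIIdeal Z (LinearMap.range J.toLinearMap)) :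
    Set.extremePoints ℝ (Metric.closedBall (0 : X) 1) = ∅ := by
  refine Set.eq_empty_of_forall_notMem fun x hx => ?_
  obtain ⟨l, hl, hxl, hxl'⟩ :=
    IsAIIdealInEverySuperspace.exists_ne_zero_norm_add_le_one_and_norm_sub_le_one hX
      (mem_closedBall_zero_iff.mp hx.1)
  exact hl (eq_zero_of_add_mem_of_sub_mem_of_mem_extremePoints hx
    (mem_closedBall_zero_iff.mpr hxl) (mem_closedBall_zero_iff.mpr hxl'))
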